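/- Fix n ∈ ℕ with n ≥ 1, let H₂, R, C be finite index types, let λ₁ : Fin n → ℝ and λ₂ : H₂ → ℝ with Λ₁ := Matrix.diagonal λ₁ and Λ₂ := Matrix.diagonal λ₂, let F, S : Matrix R C ℝ, let H× : Matrix (Fin n) H₂ ℝ, define Cmat := (Matrix.of (fun h₁ h₂ => λ₁ h₁ * λ₂ h₂)) - Λ₁ * H× * Λ₂, let W : Matrix (Fin n) H₂ ℝ, and set A := Cmat ⊗ F + (Λ₁ * W * Λ₂) ⊗ S. Let D : Matrix (Fin n) (Fin n) ℝ be D i j := if i = j then 1 else if (j : ℕ) + 1 = (i : ℕ) then −1 else 0 and Y := D * W. Regard λ₁ as the single-column matrix u : Matrix (Fin n) (Fin 1) ℝ and λ₂ as v : Matrix H₂ (Fin 1) ℝ. Then, after the canonical reindexings of Kronecker index types, A = −((Λ₁ * H× * Λ₂) ⊗ F) + (Λ₁ ⊗ (1 : Matrix R R ℝ)) * (D ⊗ (1 : Matrix R R ℝ))⁻¹ * ((Λ₂ * Yᵀ) ⊗ Sᵀ)ᵀ + (u ⊗ (1 : Matrix R R ℝ)) * (v ⊗ Fᵀ)ᵀ.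 -/

import Mathlib

/-!
Both correction terms collapse by the mixed-product rule `(P ⊗ 1) (Q ⊗ Bᵀ)ᵀ = (P Qᵀ) ⊗ B`.
The rank-one term becomes `λ₁ λ₂ᵀ ⊗ F`, which restores the first summand of `C`; in the middle
term `(D ⊗ 1)⁻¹ = D⁻¹ ⊗ 1` cancels the `D` in `Y = D W`, which is legitimate because `D` is
unit lower triangular and hence `det D = 1`.
-/

open Matrix Kronecker

namespace Matrix

variable {α k l m n p r : Type*}

theorem sub_kronecker [NonUnitalNonAssocRing α] (A₁ A₂ : Matrix l m α) (B : Matrix n p α) :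
    (A₁ - A₂) ⊗ₖ B = A₁ ⊗ₖ B - A₂ ⊗ₖ B := by
  ext ⟨_, _⟩ ⟨_, _⟩
  exact sub_mul _ _ _

theorem det_eq_one_of_isLowerTriangular [CommRing α] [Fintype m] [DecidableEq m] [LinearOrder m]
    {M : Matrix m m α} (hM : M.IsLowerTriangular) (hdiag : ∀ i, M i i = 1) : M.det = 1 := by
  simp [det_of_isLowerTriangular M hM, hdiag]

theorem kronecker_one_mul_kronecker_transpose [CommSemiring α] [Fintype m] [Fintype p]
    [DecidableEq p] (P : Matrix l m α) (Q : Matrix n m α) (B : Matrix p r α) :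
    (P ⊗ₖ (1 : Matrix p p α)) * (Q ⊗ₖ Bᵀ)ᵀ = (P * Qᵀ) ⊗ₖ B := by
  rw [← kroneckerMap_transpose, transpose_transpose, ← mul_kronecker_mul, Matrix.one_mul]

theorem kronecker_one_mul_inv_mul_kronecker_transpose [CommRing α] [Fintype m] [DecidableEq m]
    [Fintype k] [Fintype p] [DecidableEq p] (P : Matrix l m α) {D : Matrix m m α}
    (hD : IsUnit D.det) (Q : Matrix n k α) (W : Matrix m k α) (B : Matrix p r α) :
    (P ⊗ₖ (1 : Matrix p p α)) * (D ⊗ₖ (1 : Matrix p p α))⁻¹ * ((Q * (D * W)ᵀ) ⊗ₖ Bᵀ)ᵀ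
      = (P * W * Qᵀ) ⊗ₖ B := by
  rw [inv_kronecker, inv_one, ← mul_kronecker_mul, Matrix.mul_one,
    kronecker_one_mul_kronecker_transpose, transpose_mul, transpose_transpose]
  simp only [Matrix.mul_assoc, nonsing_inv_mul_cancel_left _ _ hD]

end Matrix

theorem techniqueB_full_sparsification_general
    (n : ℕ)
    {H₂ R C : Type*} [Fintype H₂] [Fintype R]
    [DecidableEq H₂] [DecidableEq R]
    (lam₁ : Fin n → ℝ) (lam₂ : H₂ → ℝ)
    (F S : Matrix R C ℝ) (Hx : Matrix (Fin n) H₂ ℝ)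
    (Cmat : Matrix (Fin n) H₂ ℝ)
    (hCmat : Cmat = Matrix.of (fun h₁ h₂ => lam₁ h₁ * lam₂ h₂)
        - Matrix.diagonal lam₁ * Hx * Matrix.diagonal lam₂)
    (W : Matrix (Fin n) H₂ ℝ)
    (A : Matrix (Fin n × R) (H₂ × C) ℝ)
    (hA : A = Cmat ⊗ₖ F + (Matrix.diagonal lam₁ * W * Matrix.diagonal lam₂) ⊗ₖ S)
    (D : Matrix (Fin n) (Fin n) ℝ)
    (hD : ∀ i j, D i j = if i = j then 1 else if (j : ℕ) + 1 = (i : ℕ) then -1 else 0)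
    (Y : Matrix (Fin n) H₂ ℝ) (hY : Y = D * W)
    (u : Matrix (Fin n) (Fin 1) ℝ) (hu : ∀ h i, u h i = lam₁ h)
    (v : Matrix H₂ (Fin 1) ℝ) (hv : ∀ h i, v h i = lam₂ h) :
    A = -((Matrix.diagonal lam₁ * Hx * Matrix.diagonal lam₂) ⊗ₖ F)
        + (Matrix.diagonal lam₁ ⊗ₖ (1 : Matrix R R ℝ))
            * (D ⊗ₖ (1 : Matrix R R ℝ))⁻¹
            * ((Matrix.diagonal lam₂ * Yᵀ) ⊗ₖ Sᵀ)ᵀ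
        + (u ⊗ₖ (1 : Matrix R R ℝ)) * (v ⊗ₖ Fᵀ)ᵀ := by
  have hD_lower : D.IsLowerTriangular := fun i j hij => by
    have hij : (i : ℕ) < j := OrderDual.toDual_lt_toDual.mp hij
    rw [hD, if_neg (by omega), if_neg (by omega)]
  have hD_det : D.det = 1 := det_eq_one_of_isLowerTriangular hD_lower fun i => by simp [hD]
  have huv : u * vᵀ = vecMulVec lam₁ lam₂ := by
    rw [show u = replicateCol (Fin 1) lam₁ from ext hu,
      show v = replicateCol (Fin 1) lam₂ from ext hv, transpose_replicateCol]
    exact (vecMulVec_eq (Fin 1) lam₁ lam₂).symm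
  rw [hA, hCmat, sub_kronecker, hY,
    kronecker_one_mul_inv_mul_kronecker_transpose _ (hD_det ▸ isUnit_one), diagonal_transpose,
    kronecker_one_mul_kronecker_transpose, huv, vecMulVec]
  abel

/-- The full sparsification produced by Technique B. -/
theorem techniqueB_full_sparsification
    (n : ℕ) (hn : 1 ≤ n)
    {H₂ R C : Type*} [Fintype H₂] [Fintype R] [Fintype C]
    [DecidableEq H₂] [DecidableEq R]
    (lam₁ : Fin n → ℝ) (lam₂ : H₂ → ℝ)
    (F S : Matrix R C ℝ) (Hx : Matrix (Fin n) H₂ ℝ)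
    (Cmat : Matrix (Fin n) H₂ ℝ)
    (hCmat : Cmat = Matrix.of (fun h₁ h₂ => lam₁ h₁ * lam₂ h₂)
        - Matrix.diagonal lam₁ * Hx * Matrix.diagonal lam₂)
    (W : Matrix (Fin n) H₂ ℝ)
    (A : Matrix (Fin n × R) (H₂ × C) ℝ)
    (hA : A = Cmat ⊗ₖ F + (Matrix.diagonal lam₁ * W * Matrix.diagonal lam₂) ⊗ₖ S)
    (D : Matrix (Fin n) (Fin n) ℝ)
    (hD : ∀ i j, D i j = if i = j then 1 else if (j : ℕ) + 1 = (i : ℕ) then -1 else 0)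
    (Y : Matrix (Fin n) H₂ ℝ) (hY : Y = D * W)
    (u : Matrix (Fin n) (Fin 1) ℝ) (hu : ∀ h i, u h i = lam₁ h)
    (v : Matrix H₂ (Fin 1) ℝ) (hv : ∀ h i, v h i = lam₂ h) :
    A = -((Matrix.diagonal lam₁ * Hx * Matrix.diagonal lam₂) ⊗ₖ F)
        + (Matrix.diagonal lam₁ ⊗ₖ (1 : Matrix R R ℝ))
            * (D ⊗ₖ (1 : Matrix R R ℝ))⁻¹
            * ((Matrix.diagonal lam₂ * Yᵀ) ⊗ₖ Sᵀ)ᵀ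
        + (u ⊗ₖ (1 : Matrix R R ℝ)) * (v ⊗ₖ Fᵀ)ᵀ :=
  techniqueB_full_sparsification_general n lam₁ lam₂ F S Hx Cmat hCmat W A hA D hD Y hY u hu v hv
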